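/- There exist constants σ₊, σ₋ ≥ 0 (depending only on p) such that for every binary quadratic form π, K_{2,p}(π) = σ₊·√(det π) if det π ≥ 0 and K_{2,p}(π) = σ₋·√(−det π) if det π ≤ 0, where det(ax² + 2bxy + cy²) = ac − b². -/

import Mathlib

open MeasureTheory

noncomputable section

/-- evaluation of the binary form of degree `m` with coefficients `a` -/
def formEval (m : ℕ) (a : Fin (m + 1) → ℝ) (z : ℝ × ℝ) : ℝ :=
  ∑ i : Fin (m + 1), a i * z.1 ^ (i : ℕ) * z.2 ^ (m - (i : ℕ))

/-- `π` is a binary homogeneous form of degree `m` (an element of H_m) -/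
def IsForm (m : ℕ) (π : ℝ × ℝ → ℝ) : Prop :=
  ∃ a : Fin (m + 1) → ℝ, ∀ z, π z = formEval m a z

/-- `p` is (the evaluation of) a polynomial of total degree at most `n` -/
def IsPolyDeg (n : ℕ) (p : ℝ × ℝ → ℝ) : Prop :=
  ∃ q : MvPolynomial (Fin 2) ℝ, q.totalDegree ≤ n ∧
    ∀ z : ℝ × ℝ, p z = MvPolynomial.eval ![z.1, z.2] q

/-- the Lagrange interpolation nodes of degree `m - 1` on the triangle with vertices
`T 0, T 1, T 2`: the points whose barycentric coordinates lie in {0, 1/(m−1), …, 1} -/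
def interpNodes (m : ℕ) (T : Fin 3 → ℝ × ℝ) : Set (ℝ × ℝ) :=
  { z | ∃ k : Fin 3 → ℕ, (∑ i, k i) = m - 1 ∧
      z = ∑ i, ((k i : ℝ) / ((m : ℝ) - 1)) • T i }

/-- `p` is the degree `m - 1` Lagrange interpolant of `v` on the triangle `T` -/
def IsInterpolant (m : ℕ) (T : Fin 3 → ℝ × ℝ) (v p : ℝ × ℝ → ℝ) : Prop :=
  IsPolyDeg (m - 1) p ∧ ∀ z ∈ interpNodes m T, p z = v z

/-- the Lagrange interpolation operator `I_{m,T}` of degree `m - 1` on the triangle `T` -/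
def interp (m : ℕ) (T : Fin 3 → ℝ × ℝ) (v : ℝ × ℝ → ℝ) : ℝ × ℝ → ℝ := by
  classical exact if h : ∃ p, IsInterpolant m T v p then h.choose else 0

/-- the (closed) triangle with vertices `T 0, T 1, T 2` -/
def triangleSet (T : Fin 3 → ℝ × ℝ) : Set (ℝ × ℝ) := convexHull ℝ (Set.range T)

/-- the area of the triangle with vertices `T 0, T 1, T 2` -/
def triArea (T : Fin 3 → ℝ × ℝ) : ℝ :=
  |((T 1).1 - (T 0).1) * ((T 2).2 - (T 0).2) -
    ((T 2).1 - (T 0).1) * ((T 1).2 - (T 0).2)| / 2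

/-- the interpolation error `‖v − I_{m,T} v‖_{L^p(T)}` -/
def lpErr (m : ℕ) (p : ℝ) (T : Fin 3 → ℝ × ℝ) (v : ℝ × ℝ → ℝ) : ℝ :=
  (∫ z in triangleSet T, |v z - interp m T v z| ^ p) ^ (1 / p)

/-- the interpolation error `‖v − I_{m,T} v‖_{L^∞(T)}` -/
def supErr (m : ℕ) (T : Fin 3 → ℝ × ℝ) (v : ℝ × ℝ → ℝ) : ℝ :=
  sSup ((fun z => |v z - interp m T v z|) '' triangleSet T)

/-- the shape function `K_{m,p}(π) = inf_{|T|=1} ‖π − I_{m,T} π‖_{L^p(T)}` -/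
def Kfun (m : ℕ) (p : ℝ) (π : ℝ × ℝ → ℝ) : ℝ :=
  sInf { e | ∃ T : Fin 3 → ℝ × ℝ, triArea T = 1 ∧ e = lpErr m p T π }


/-!
Equi-affine changes of variables permute the unit-area triangles and commute with affine
interpolation, so `K(π ∘ φ) = K(π)` when `|det φ| = 1`; together with `K(λ π) = |λ| K(π)` and the
2-homogeneity of `π` this gives `K(π ∘ φ) = |det φ| K(π)` for every invertible `φ`. Completing the
square (after a swap or a shear of the variables when `a = 0`) turns `a x² + 2 b x y + c y²` into
`x² + (a c - b²) y²` without changing `K`, and rescaling `y` leaves `√|a c - b²|` times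
`K(x² + y²)` or `K(x² - y²)`. The degenerate form `x²` has `K = 0`: stretching `x` by `2`
multiplies `x²` by `4` but `K` by only `2`.
-/

open scoped Matrix Pointwise

def affineFun (c : Fin 3 → ℝ) (z : ℝ × ℝ) : ℝ := c 0 + c 1 * z.1 + c 2 * z.2

open MvPolynomial in
lemma eval_eq_of_totalDegree_le_one {q : MvPolynomial (Fin 2) ℝ} (hq : q.totalDegree ≤ 1)
    (x : Fin 2 → ℝ) :
    eval x q = q.coeff 0 + q.coeff (Finsupp.single 0 1) * x 0 +
      q.coeff (Finsupp.single 1 1) * x 1 := by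
  have hsupp : q.support ⊆ {0, Finsupp.single 0 1, Finsupp.single 1 1} := by
    intro d hd
    have h := (le_totalDegree hd).trans hq
    rw [Finsupp.sum_fintype _ _ (fun _ => rfl), Fin.sum_univ_two] at h
    have hd : d = Finsupp.single 0 (d 0) + Finsupp.single 1 (d 1) := by
      ext i; fin_cases i <;> simp
    rcases (by omega : d 0 = 0 ∨ d 0 = 1) with h0 | h0 <;>
      rcases (by omega : d 1 = 0 ∨ d 1 = 1) with h1 | h1 <;>
      first | omega | (rw [hd, h0, h1]; simp)
  rw [eval_eq', Finset.sum_subset hsupp fun d _ hd => by simp [notMem_support_iff.mp hd],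
    Finset.sum_insert (by simp [eq_comm (a := (0 : Fin 2 →₀ ℕ))]),
    Finset.sum_insert (by simp [Finsupp.single_eq_single_iff]), Finset.sum_singleton]
  simp [Fin.prod_univ_two]
  ring

open MvPolynomial in
lemma isPolyDeg_one_iff {f : ℝ × ℝ → ℝ} : IsPolyDeg 1 f ↔ ∃ c, f = affineFun c := by
  constructor
  · rintro ⟨q, hq, hf⟩
    refine ⟨![q.coeff 0, q.coeff (Finsupp.single 0 1), q.coeff (Finsupp.single 1 1)], ?_⟩
    ext z
    rw [hf, eval_eq_of_totalDegree_le_one hq]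
    simp [affineFun]
  · rintro ⟨c, rfl⟩
    refine ⟨C (c 0) + c 1 • X 0 + c 2 • X 1, ?_, fun z => by simp [affineFun]⟩
    refine (totalDegree_add _ _).trans (max_le ((totalDegree_add _ _).trans (max_le ?_ ?_)) ?_)
    · simp
    all_goals exact (totalDegree_smul_le _ _).trans (by simp)

lemma interpNodes_two (T : Fin 3 → ℝ × ℝ) : interpNodes 2 T = Set.range T := by
  ext z
  constructor
  · rintro ⟨k, hk, rfl⟩
    simp only [Fin.sum_univ_three] at hk ⊢
    rcases (by omega : k 0 = 1 ∧ k 1 = 0 ∧ k 2 = 0 ∨ k 0 = 0 ∧ k 1 = 1 ∧ k 2 = 0 ∨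
        k 0 = 0 ∧ k 1 = 0 ∧ k 2 = 1) with ⟨h0, h1, h2⟩ | ⟨h0, h1, h2⟩ | ⟨h0, h1, h2⟩
    · exact ⟨0, by norm_num [h0, h1, h2]⟩
    · exact ⟨1, by norm_num [h0, h1, h2]⟩
    · exact ⟨2, by norm_num [h0, h1, h2]⟩
  · rintro ⟨j, rfl⟩
    refine ⟨Pi.single j 1, by simp, ?_⟩
    fin_cases j <;> norm_num [Fin.sum_univ_three, Pi.single_apply]

def vertexMatrix (T : Fin 3 → ℝ × ℝ) : Matrix (Fin 3) (Fin 3) ℝ :=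
  !![1, (T 0).1, (T 0).2; 1, (T 1).1, (T 1).2; 1, (T 2).1, (T 2).2]

lemma vertexMatrix_mulVec (T : Fin 3 → ℝ × ℝ) (c : Fin 3 → ℝ) :
    vertexMatrix T *ᵥ c = fun i => affineFun c (T i) := by
  ext i
  fin_cases i <;> simp [vertexMatrix, affineFun, Matrix.vecHead, Matrix.vecTail] <;> ring

lemma triArea_eq_abs_det_vertexMatrix (T : Fin 3 → ℝ × ℝ) :
    triArea T = |(vertexMatrix T).det| / 2 := by
  have hdet : (vertexMatrix T).det = ((T 1).1 - (T 0).1) * ((T 2).2 - (T 0).2) -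
      ((T 2).1 - (T 0).1) * ((T 1).2 - (T 0).2) := by
    simp [vertexMatrix, Matrix.det_fin_three]; ring
  rw [triArea, hdet]

lemma isUnit_vertexMatrix {T : Fin 3 → ℝ × ℝ} (hT : triArea T ≠ 0) :
    IsUnit (vertexMatrix T) := by
  rw [triArea_eq_abs_det_vertexMatrix] at hT
  exact (Matrix.isUnit_iff_isUnit_det _).mpr (isUnit_iff_ne_zero.mpr fun h => hT (by simp [h]))

lemma exists_affineFun_eq_on_vertices {T : Fin 3 → ℝ × ℝ} (hT : triArea T ≠ 0)
    (v : ℝ × ℝ → ℝ) : ∃ c, ∀ i, affineFun c (T i) = v (T i) := by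
  obtain ⟨c, hc⟩ := Matrix.mulVec_surjective_iff_isUnit.mpr (isUnit_vertexMatrix hT)
    (fun i => v (T i))
  rw [vertexMatrix_mulVec] at hc
  exact ⟨c, congrFun hc⟩

lemma affineFun_eq_of_eq_on_vertices {T : Fin 3 → ℝ × ℝ} (hT : triArea T ≠ 0)
    {c c' : Fin 3 → ℝ} (h : ∀ i, affineFun c (T i) = affineFun c' (T i)) :
    affineFun c = affineFun c' := by
  have hc : vertexMatrix T *ᵥ c = vertexMatrix T *ᵥ c' := by
    rw [vertexMatrix_mulVec, vertexMatrix_mulVec]; exact funext h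
  rw [Matrix.mulVec_injective_iff_isUnit.mpr (isUnit_vertexMatrix hT) hc]

lemma interp_two_eq {T : Fin 3 → ℝ × ℝ} (hT : triArea T ≠ 0) {v : ℝ × ℝ → ℝ}
    {c : Fin 3 → ℝ} (hc : ∀ i, affineFun c (T i) = v (T i)) :
    interp 2 T v = affineFun c := by
  have hex : ∃ f, IsInterpolant 2 T v f := by
    refine ⟨affineFun c, isPolyDeg_one_iff.mpr ⟨c, rfl⟩, ?_⟩
    rw [interpNodes_two]
    rintro _ ⟨i, rfl⟩
    exact hc i
  obtain ⟨hpoly, hnodes⟩ := hex.choose_spec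
  obtain ⟨c', hc'⟩ := isPolyDeg_one_iff.mp hpoly
  rw [interp, dif_pos hex, hc']
  refine affineFun_eq_of_eq_on_vertices hT fun i => ?_
  rw [← hc', hnodes _ (by rw [interpNodes_two]; exact ⟨i, rfl⟩), hc i]

lemma interp_two_smul {T : Fin 3 → ℝ × ℝ} (hT : triArea T ≠ 0) (a : ℝ) (v : ℝ × ℝ → ℝ) :
    interp 2 T (a • v) = a • interp 2 T v := by
  obtain ⟨c, hc⟩ := exists_affineFun_eq_on_vertices hT v
  have hac : ∀ i, affineFun (a • c) (T i) = (a • v) (T i) := fun i => by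
    simp only [Pi.smul_apply, smul_eq_mul, ← hc i, affineFun]; ring
  rw [interp_two_eq hT hac, interp_two_eq hT hc]
  ext z
  simp only [Pi.smul_apply, smul_eq_mul, affineFun]; ring

def planeCLM (M : Matrix (Fin 2) (Fin 2) ℝ) : ℝ × ℝ →L[ℝ] ℝ × ℝ :=
  LinearMap.toContinuousLinearMap
    (Matrix.toLin (Module.Basis.finTwoProd ℝ) (Module.Basis.finTwoProd ℝ) M)

lemma planeCLM_apply (M : Matrix (Fin 2) (Fin 2) ℝ) (z : ℝ × ℝ) :
    planeCLM M z = (M 0 0 * z.1 + M 0 1 * z.2, M 1 0 * z.1 + M 1 1 * z.2) := by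
  conv_lhs => rw [Matrix.eta_fin_two M]
  exact Matrix.toLin_finTwoProd_apply _ _ _ _ _

lemma det_planeCLM (M : Matrix (Fin 2) (Fin 2) ℝ) : (planeCLM M).det = M.det :=
  LinearMap.det_toLin _ M

lemma planeCLM_mul_apply (M N : Matrix (Fin 2) (Fin 2) ℝ) (z : ℝ × ℝ) :
    planeCLM (M * N) z = planeCLM M (planeCLM N z) := by
  simp only [planeCLM_apply, Matrix.mul_apply, Fin.sum_univ_two]
  ext <;> ring

lemma planeCLM_smul_apply (r : ℝ) (M : Matrix (Fin 2) (Fin 2) ℝ) (z : ℝ × ℝ) :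
    planeCLM (r • M) z = r • planeCLM M z := by
  simp only [planeCLM_apply, Matrix.smul_apply, smul_eq_mul, Prod.smul_mk]
  ext <;> ring

lemma planeCLM_inv_apply_planeCLM {M : Matrix (Fin 2) (Fin 2) ℝ} (hM : M.det ≠ 0)
    (z : ℝ × ℝ) : planeCLM M⁻¹ (planeCLM M z) = z := by
  rw [← planeCLM_mul_apply, Matrix.nonsing_inv_mul _ (isUnit_iff_ne_zero.mpr hM),
    planeCLM_apply]
  simp

lemma planeCLM_apply_planeCLM_inv {M : Matrix (Fin 2) (Fin 2) ℝ} (hM : M.det ≠ 0)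
    (z : ℝ × ℝ) : planeCLM M (planeCLM M⁻¹ z) = z := by
  rw [← planeCLM_mul_apply, Matrix.mul_nonsing_inv _ (isUnit_iff_ne_zero.mpr hM),
    planeCLM_apply]
  simp

lemma triArea_planeCLM_comp (M : Matrix (Fin 2) (Fin 2) ℝ) (T : Fin 3 → ℝ × ℝ) :
    triArea (planeCLM M ∘ T) = |M.det| * triArea T := by
  simp only [triArea, Function.comp_apply, planeCLM_apply, Matrix.det_fin_two]
  rw [mul_div_assoc', ← abs_mul]
  congr 2
  ring

lemma triangleSet_planeCLM_comp (M : Matrix (Fin 2) (Fin 2) ℝ) (T : Fin 3 → ℝ × ℝ) :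
    triangleSet (planeCLM M ∘ T) = planeCLM M '' triangleSet T := by
  rw [triangleSet, triangleSet, Set.range_comp]
  exact ((planeCLM M : ℝ × ℝ →ₗ[ℝ] ℝ × ℝ).image_convexHull _).symm

lemma affineFun_comp_planeCLM (c : Fin 3 → ℝ) (M : Matrix (Fin 2) (Fin 2) ℝ) :
    affineFun c ∘ planeCLM M =
      affineFun ![c 0, c 1 * M 0 0 + c 2 * M 1 0, c 1 * M 0 1 + c 2 * M 1 1] := by
  ext z
  simp [planeCLM_apply, affineFun]
  ring

lemma interp_two_comp_planeCLM {T : Fin 3 → ℝ × ℝ} (hT : triArea T ≠ 0)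
    {M : Matrix (Fin 2) (Fin 2) ℝ} (hM : M.det ≠ 0) (v : ℝ × ℝ → ℝ) :
    interp 2 T (v ∘ planeCLM M) = interp 2 (planeCLM M ∘ T) v ∘ planeCLM M := by
  have hMT : triArea (planeCLM M ∘ T) ≠ 0 := by
    rw [triArea_planeCLM_comp]; exact mul_ne_zero (abs_ne_zero.mpr hM) hT
  obtain ⟨c, hc⟩ := exists_affineFun_eq_on_vertices hMT v
  rw [interp_two_eq hMT hc, affineFun_comp_planeCLM]
  refine interp_two_eq hT fun i => ?_
  rw [← affineFun_comp_planeCLM]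
  exact hc i

lemma lpErr_two_smul {p : ℝ} (hp : p ≠ 0) {T : Fin 3 → ℝ × ℝ} (hT : triArea T ≠ 0) (a : ℝ)
    (v : ℝ × ℝ → ℝ) : lpErr 2 p T (a • v) = |a| * lpErr 2 p T v := by
  have hpoint : ∀ z, |(a • v) z - (a • interp 2 T v) z| ^ p =
      |a| ^ p * |v z - interp 2 T v z| ^ p := fun z => by
    simp only [Pi.smul_apply, smul_eq_mul, ← mul_sub, abs_mul]
    exact Real.mul_rpow (abs_nonneg _) (abs_nonneg _)
  have hint : 0 ≤ ∫ z in triangleSet T, |v z - interp 2 T v z| ^ p :=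
    integral_nonneg fun z => by positivity
  rw [lpErr, lpErr, interp_two_smul hT, funext hpoint, integral_const_mul,
    Real.mul_rpow (by positivity) hint, ← Real.rpow_mul (abs_nonneg a), mul_one_div_cancel hp,
    Real.rpow_one]

lemma lpErr_two_comp_planeCLM (p : ℝ) {T : Fin 3 → ℝ × ℝ} (hT : triArea T ≠ 0)
    {M : Matrix (Fin 2) (Fin 2) ℝ} (hM : |M.det| = 1) (v : ℝ × ℝ → ℝ) :
    lpErr 2 p T (v ∘ planeCLM M) = lpErr 2 p (planeCLM M ∘ T) v := by
  have hM₀ : M.det ≠ 0 := fun h => by simp [h] at hM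
  have hmeas : MeasurableSet (triangleSet T) :=
    ((Set.finite_range T).isCompact_convexHull ℝ).measurableSet
  have hinj : Set.InjOn (planeCLM M) (triangleSet T) :=
    (Function.LeftInverse.injective (planeCLM_inv_apply_planeCLM hM₀)).injOn
  rw [lpErr, lpErr, interp_two_comp_planeCLM hT hM₀, triangleSet_planeCLM_comp,
    integral_image_eq_integral_abs_det_fderiv_smul volume hmeas
      (fun z _ => (planeCLM M).hasFDerivAt.hasFDerivWithinAt) hinj]
  simp [det_planeCLM, hM]

lemma Kfun_nonneg (m : ℕ) (p : ℝ) (v : ℝ × ℝ → ℝ) : 0 ≤ Kfun m p v :=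
  Real.sInf_nonneg <| by
    rintro _ ⟨T, -, rfl⟩
    exact Real.rpow_nonneg (integral_nonneg fun z => by positivity) _

lemma Kfun_two_smul {p : ℝ} (hp : p ≠ 0) (a : ℝ) (v : ℝ × ℝ → ℝ) :
    Kfun 2 p (a • v) = |a| * Kfun 2 p v := by
  have hset : {e | ∃ T, triArea T = 1 ∧ e = lpErr 2 p T (a • v)} =
      |a| • {e | ∃ T, triArea T = 1 ∧ e = lpErr 2 p T v} := by
    ext e
    simp only [Set.mem_smul_set, smul_eq_mul]
    constructor
    · rintro ⟨T, hT, rfl⟩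
      exact ⟨_, ⟨T, hT, rfl⟩, (lpErr_two_smul hp (by simp [hT]) a v).symm⟩
    · rintro ⟨_, ⟨T, hT, rfl⟩, rfl⟩
      exact ⟨T, hT, (lpErr_two_smul hp (by simp [hT]) a v).symm⟩
  rw [Kfun, Kfun, hset, Real.sInf_smul_of_nonneg (abs_nonneg a), smul_eq_mul]

lemma Kfun_two_comp_planeCLM (p : ℝ) {M : Matrix (Fin 2) (Fin 2) ℝ} (hM : |M.det| = 1)
    (v : ℝ × ℝ → ℝ) : Kfun 2 p (v ∘ planeCLM M) = Kfun 2 p v := by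
  have hM₀ : M.det ≠ 0 := fun h => by simp [h] at hM
  rw [Kfun, Kfun]
  congr 1
  ext e
  constructor
  · rintro ⟨T, hT, rfl⟩
    refine ⟨planeCLM M ∘ T, by rw [triArea_planeCLM_comp, hM, hT, one_mul], ?_⟩
    exact lpErr_two_comp_planeCLM p (by simp [hT]) hM v
  · rintro ⟨S, hS, rfl⟩
    have hM' : |M⁻¹.det| = 1 := by simp [Matrix.det_nonsing_inv, hM]
    have hS' : triArea (planeCLM M⁻¹ ∘ S) = 1 := by
      rw [triArea_planeCLM_comp, hM', hS, one_mul]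
    have hSM : planeCLM M ∘ planeCLM M⁻¹ ∘ S = S :=
      funext fun i => planeCLM_apply_planeCLM_inv hM₀ (S i)
    refine ⟨planeCLM M⁻¹ ∘ S, hS', ?_⟩
    rw [lpErr_two_comp_planeCLM p (by simp [hS']) hM, hSM]

lemma Kfun_two_comp_planeCLM_of_homogeneous {p : ℝ} (hp : p ≠ 0) {v : ℝ × ℝ → ℝ}
    (hv : ∀ (r : ℝ) z, v (r • z) = r ^ 2 * v z) {M : Matrix (Fin 2) (Fin 2) ℝ}
    (hM : M.det ≠ 0) : Kfun 2 p (v ∘ planeCLM M) = |M.det| * Kfun 2 p v := by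
  set r := √|M.det|
  have hr : 0 < r := Real.sqrt_pos.mpr (abs_pos.mpr hM)
  have hr2 : r ^ 2 = |M.det| := Real.sq_sqrt (abs_nonneg _)
  have hN : |(r⁻¹ • M).det| = 1 := by
    rw [Matrix.det_smul, Fintype.card_fin, abs_mul, abs_pow, abs_inv, abs_of_pos hr, inv_pow,
      hr2, inv_mul_cancel₀ (abs_ne_zero.mpr hM)]
  have hfactor : v ∘ planeCLM M = |M.det| • (v ∘ planeCLM (r⁻¹ • M)) := by
    ext z
    have hz : planeCLM M z = r • planeCLM (r⁻¹ • M) z := by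
      rw [← planeCLM_smul_apply, smul_inv_smul₀ hr.ne']
    simp only [Function.comp_apply, Pi.smul_apply, smul_eq_mul, hz, hv, hr2]
  rw [hfactor, Kfun_two_smul hp, abs_abs, Kfun_two_comp_planeCLM p hN]

def quadForm (a b c : ℝ) : ℝ × ℝ → ℝ := fun z => a * z.1 ^ 2 + 2 * b * z.1 * z.2 + c * z.2 ^ 2

lemma quadForm_smul_apply (a b c r : ℝ) (z : ℝ × ℝ) :
    quadForm a b c (r • z) = r ^ 2 * quadForm a b c z := by
  simp only [quadForm, Prod.smul_fst, Prod.smul_snd, smul_eq_mul]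
  ring

lemma Kfun_quadForm_one_zero_zero {p : ℝ} (hp : p ≠ 0) : Kfun 2 p (quadForm 1 0 0) = 0 := by
  have hcomp : quadForm 1 0 0 ∘ planeCLM !![2, 0; 0, 1] = (4 : ℝ) • quadForm 1 0 0 := by
    ext z; simp [quadForm, planeCLM_apply]; ring
  have h := Kfun_two_comp_planeCLM_of_homogeneous hp (quadForm_smul_apply 1 0 0)
    (M := !![2, 0; 0, 1]) (by norm_num [Matrix.det_fin_two_of])
  rw [hcomp, Kfun_two_smul hp, Matrix.det_fin_two_of] at h
  norm_num at h
  linarith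

lemma Kfun_quadForm_eq_of_ne_zero {p : ℝ} (hp : p ≠ 0) {a : ℝ} (ha : a ≠ 0) (b c : ℝ) :
    Kfun 2 p (quadForm a b c) = Kfun 2 p (quadForm 1 0 (a * c - b ^ 2)) := by
  -- completing the square: `a * π(x, y) = (a x + b y)² + (a c - b²) y²`
  have hcomp : quadForm 1 0 (a * c - b ^ 2) ∘ planeCLM !![a, b; 0, 1] = a • quadForm a b c := by
    ext z; simp [quadForm, planeCLM_apply]; ring
  have h := Kfun_two_comp_planeCLM_of_homogeneous hp (quadForm_smul_apply 1 0 (a * c - b ^ 2))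
    (M := !![a, b; 0, 1]) (by simpa [Matrix.det_fin_two_of] using ha)
  rw [hcomp, Kfun_two_smul hp, Matrix.det_fin_two_of, mul_one, mul_zero, sub_zero] at h
  exact mul_left_cancel₀ (abs_ne_zero.mpr ha) h

lemma Kfun_quadForm_eq {p : ℝ} (hp : p ≠ 0) (a b c : ℝ) :
    Kfun 2 p (quadForm a b c) = Kfun 2 p (quadForm 1 0 (a * c - b ^ 2)) := by
  rcases ne_or_eq a 0 with ha | rfl
  · exact Kfun_quadForm_eq_of_ne_zero hp ha b c
  rcases ne_or_eq c 0 with hc | rfl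
  · have hswap : quadForm 0 b c ∘ planeCLM !![0, 1; 1, 0] = quadForm c b 0 := by
      ext z; simp [quadForm, planeCLM_apply]; ring
    rw [← Kfun_two_comp_planeCLM p (M := !![0, 1; 1, 0]) (by simp [Matrix.det_fin_two_of]),
      hswap, Kfun_quadForm_eq_of_ne_zero hp hc, mul_comm]
  rcases ne_or_eq b 0 with hb | rfl
  · have hshear : quadForm 0 b 0 ∘ planeCLM !![1, 0; 1, 1] = quadForm (2 * b) b 0 := by
      ext z; simp [quadForm, planeCLM_apply]; ring
    rw [← Kfun_two_comp_planeCLM p (M := !![1, 0; 1, 1]) (by simp [Matrix.det_fin_two_of]),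
      hshear, Kfun_quadForm_eq_of_ne_zero hp (mul_ne_zero two_ne_zero hb)]
    ring_nf
  have hzero : quadForm 0 0 0 = (0 : ℝ) • quadForm 1 0 0 := by ext z; simp [quadForm]
  rw [hzero, Kfun_two_smul hp]
  norm_num [Kfun_quadForm_one_zero_zero hp]

lemma Kfun_quadForm_one_zero_mul_sq {p : ℝ} (hp : p ≠ 0) (s : ℝ) {t : ℝ} (ht : 0 < t) :
    Kfun 2 p (quadForm 1 0 (s * t ^ 2)) = t * Kfun 2 p (quadForm 1 0 s) := by
  have hcomp : quadForm 1 0 s ∘ planeCLM !![1, 0; 0, t] = quadForm 1 0 (s * t ^ 2) := by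
    ext z; simp [quadForm, planeCLM_apply]; ring
  rw [← hcomp, Kfun_two_comp_planeCLM_of_homogeneous hp (quadForm_smul_apply 1 0 s)
    (by simpa [Matrix.det_fin_two_of] using ht.ne'), Matrix.det_fin_two_of]
  simp [abs_of_pos ht]

lemma Kfun_quadForm_one_zero_of_nonneg {p : ℝ} (hp : p ≠ 0) {d : ℝ} (hd : 0 ≤ d) :
    Kfun 2 p (quadForm 1 0 d) = √d * Kfun 2 p (quadForm 1 0 1) := by
  rcases hd.eq_or_lt with rfl | hd
  · simp [Kfun_quadForm_one_zero_zero hp]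
  · rw [← Kfun_quadForm_one_zero_mul_sq hp 1 (Real.sqrt_pos.mpr hd), Real.sq_sqrt hd.le,
      one_mul]

lemma Kfun_quadForm_one_zero_of_nonpos {p : ℝ} (hp : p ≠ 0) {d : ℝ} (hd : d ≤ 0) :
    Kfun 2 p (quadForm 1 0 d) = √(-d) * Kfun 2 p (quadForm 1 0 (-1)) := by
  rcases hd.eq_or_lt with rfl | hd
  · simp [Kfun_quadForm_one_zero_zero hp]
  · rw [← Kfun_quadForm_one_zero_mul_sq hp (-1) (Real.sqrt_pos.mpr (neg_pos.mpr hd)),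
      Real.sq_sqrt (neg_nonneg.mpr hd.le), neg_one_mul, neg_neg]

/-- there exist constants σ₊, σ₋ ≥ 0 depending only on p such that for every
binary quadratic form π = ax² + 2bxy + cy², K_{2,p}(π) = σ₊·√(det π) if det π ≥ 0 and
K_{2,p}(π) = σ₋·√(−det π) if det π ≤ 0, where det π = ac − b². -/
theorem stmt15 (p : ℝ) (hp : 1 ≤ p) :
    ∃ σp σm : ℝ, 0 ≤ σp ∧ 0 ≤ σm ∧ ∀ a b c : ℝ,
      (0 ≤ a * c - b ^ 2 →
        Kfun 2 p (fun z => a * z.1 ^ 2 + 2 * b * z.1 * z.2 + c * z.2 ^ 2) =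
          σp * Real.sqrt (a * c - b ^ 2)) ∧
      (a * c - b ^ 2 ≤ 0 →
        Kfun 2 p (fun z => a * z.1 ^ 2 + 2 * b * z.1 * z.2 + c * z.2 ^ 2) =
          σm * Real.sqrt (b ^ 2 - a * c)) := by
  have hp₀ : p ≠ 0 := by positivity
  refine ⟨Kfun 2 p (quadForm 1 0 1), Kfun 2 p (quadForm 1 0 (-1)), Kfun_nonneg _ _ _,
    Kfun_nonneg _ _ _, fun a b c => ⟨fun hd => ?_, fun hd => ?_⟩⟩
  · change Kfun 2 p (quadForm a b c) = _
    rw [Kfun_quadForm_eq hp₀, Kfun_quadForm_one_zero_of_nonneg hp₀ hd, mul_comm]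
  · change Kfun 2 p (quadForm a b c) = _
    rw [Kfun_quadForm_eq hp₀, Kfun_quadForm_one_zero_of_nonpos hp₀ hd, neg_sub, mul_comm]

end
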